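/- Let ℓ = P a with P ∈ ℝ^{n×r} orthonormal columns, and let ℓ̂ = ℓ + e where e = −I_T (I_T' Ψ I_T)^{-1} I_T' Ψ ℓ with Ψ = I − P̂P̂'. If ‖I_T' P̂‖ ≤ δ < 1 and sinθ_max(P̂,P) ≤ Δ, then ‖e‖ ≤ Δ ‖a‖ / (1 − δ²). -/

import Mathlib

/-! With `B = I_Tᵀ P̂` and `I_Tᵀ I_T = 1`, the matrix `I_Tᵀ Ψ I_T` equals `1 - B Bᵀ`. As
`‖B Bᵀ‖ ≤ δ² < 1`, the triangle inequality gives `‖(1 - B Bᵀ) x‖ ≥ (1 - δ²) ‖x‖`, so this matrix is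
invertible and its inverse has norm at most `1 / (1 - δ²)`. Both `I_T` and `I_Tᵀ` are contractions,
hence `‖e‖ ≤ ‖Ψ P a‖ / (1 - δ²) ≤ Δ ‖a‖ / (1 - δ²)`. -/

open Matrix MeasureTheory

noncomputable def spNorm {m n : Type*} [Fintype m] [Fintype n] [DecidableEq n]
    (A : Matrix m n ℝ) : ℝ :=
  ‖LinearMap.toContinuousLinearMap (Matrix.toEuclideanLin A)‖

noncomputable def vnorm {n : Type*} [Fintype n] (x : n → ℝ) : ℝ :=
  Real.sqrt (∑ i, x i ^ 2)

def selMat {n : ℕ} (T : Finset (Fin n)) : Matrix (Fin n) {i // i ∈ T} ℝ :=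
  fun i j => if i = (j : Fin n) then 1 else 0

section Norms

open scoped Matrix.Norms.L2Operator

variable {m n : Type*} [Fintype m] [Fintype n]

theorem vnorm_eq_norm_toLp (x : n → ℝ) : vnorm x = ‖WithLp.toLp 2 x‖ := by
  simp only [vnorm, EuclideanSpace.norm_eq, Real.norm_eq_abs, sq_abs]

theorem vnorm_nonneg (x : n → ℝ) : 0 ≤ vnorm x := Real.sqrt_nonneg _

theorem vnorm_neg (x : n → ℝ) : vnorm (-x) = vnorm x := by
  simp only [vnorm, Pi.neg_apply, neg_sq]

theorem vnorm_eq_zero {x : n → ℝ} : vnorm x = 0 ↔ x = 0 := by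
  rw [vnorm_eq_norm_toLp, norm_eq_zero, WithLp.toLp_eq_zero]

theorem vnorm_sub_vnorm_le (x y : n → ℝ) : vnorm x - vnorm y ≤ vnorm (x - y) := by
  simpa only [vnorm_eq_norm_toLp, WithLp.toLp_sub] using norm_sub_norm_le _ _

variable [DecidableEq n]

theorem spNorm_eq_l2_opNorm (A : Matrix m n ℝ) : spNorm A = ‖A‖ := rfl

theorem spNorm_nonneg (A : Matrix m n ℝ) : 0 ≤ spNorm A := norm_nonneg _

theorem spNorm_transpose [DecidableEq m] (A : Matrix m n ℝ) : spNorm Aᵀ = spNorm A := by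
  rw [spNorm_eq_l2_opNorm, spNorm_eq_l2_opNorm, ← conjTranspose_eq_transpose_of_trivial,
    l2_opNorm_conjTranspose]

theorem vnorm_mulVec_le (A : Matrix m n ℝ) (x : n → ℝ) :
    vnorm (A *ᵥ x) ≤ spNorm A * vnorm x := by
  rw [vnorm_eq_norm_toLp, vnorm_eq_norm_toLp]
  exact l2_opNorm_mulVec A (WithLp.toLp 2 x)

theorem vnorm_mulVec_le_of_spNorm_le {A : Matrix m n ℝ} {c : ℝ} (hA : spNorm A ≤ c)
    (x : n → ℝ) : vnorm (A *ᵥ x) ≤ c * vnorm x :=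
  (vnorm_mulVec_le A x).trans (mul_le_mul_of_nonneg_right hA (vnorm_nonneg x))

theorem spNorm_le_one_of_transpose_mul_self {A : Matrix m n ℝ} (hA : Aᵀ * A = 1) :
    spNorm A ≤ 1 := by
  have hsq : spNorm A * spNorm A ≤ 1 := by
    rw [spNorm_eq_l2_opNorm, ← l2_opNorm_conjTranspose_mul_self,
      conjTranspose_eq_transpose_of_trivial, hA, ← spNorm_eq_l2_opNorm]
    refine ContinuousLinearMap.opNorm_le_bound _ zero_le_one fun x => ?_
    simp [toLpLin_one]
  nlinarith [spNorm_nonneg A]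

end Norms

section Invertibility

variable {n : Type*} [Fintype n] [DecidableEq n]

theorem isUnit_of_mul_vnorm_le_vnorm_mulVec {M : Matrix n n ℝ} {c : ℝ} (hc : 0 < c)
    (hM : ∀ x, c * vnorm x ≤ vnorm (M *ᵥ x)) : IsUnit M := by
  refine mulVec_injective_iff_isUnit.mp fun x y hxy => ?_
  have hker : vnorm (x - y) ≤ 0 := by
    have := hM (x - y)
    rw [mulVec_sub, hxy, sub_self, vnorm_eq_zero.mpr rfl] at this
    exact nonpos_of_mul_nonpos_right this hc
  exact sub_eq_zero.mp (vnorm_eq_zero.mp (hker.antisymm (vnorm_nonneg _)))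

theorem vnorm_inv_mulVec_le {M : Matrix n n ℝ} {c : ℝ} (hc : 0 < c)
    (hM : ∀ x, c * vnorm x ≤ vnorm (M *ᵥ x)) (y : n → ℝ) :
    vnorm (M⁻¹ *ᵥ y) ≤ vnorm y / c := by
  have hMM : M * M⁻¹ = 1 :=
    mul_nonsing_inv M ((isUnit_iff_isUnit_det M).mp (isUnit_of_mul_vnorm_le_vnorm_mulVec hc hM))
  rw [le_div_iff₀ hc, mul_comm]
  simpa only [mulVec_mulVec, hMM, one_mulVec] using hM (M⁻¹ *ᵥ y)

end Invertibility

theorem mul_vnorm_le_vnorm_one_sub_mul_transpose_mulVec {m n : Type*} [Fintype m] [Fintype n]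
    [DecidableEq m] [DecidableEq n] {B : Matrix m n ℝ} {δ : ℝ} (hB : spNorm B ≤ δ) (x : m → ℝ) :
    (1 - δ ^ 2) * vnorm x ≤ vnorm ((1 - B * Bᵀ) *ᵥ x) := by
  have hδ : 0 ≤ δ := (spNorm_nonneg B).trans hB
  have hBt : spNorm Bᵀ ≤ δ := (spNorm_transpose B).trans_le hB
  have hBBt : vnorm (B *ᵥ (Bᵀ *ᵥ x)) ≤ δ ^ 2 * vnorm x :=
    calc vnorm (B *ᵥ (Bᵀ *ᵥ x)) ≤ δ * vnorm (Bᵀ *ᵥ x) := vnorm_mulVec_le_of_spNorm_le hB _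
      _ ≤ δ * (δ * vnorm x) := mul_le_mul_of_nonneg_left (vnorm_mulVec_le_of_spNorm_le hBt x) hδ
      _ = δ ^ 2 * vnorm x := by ring
  have hsub := vnorm_sub_vnorm_le x (B *ᵥ (Bᵀ *ᵥ x))
  rw [sub_mulVec, one_mulVec, ← mulVec_mulVec]
  linarith

theorem selMat_transpose_mul_self {n : ℕ} (T : Finset (Fin n)) :
    (selMat T)ᵀ * selMat T = 1 := by
  ext j k
  simp only [mul_apply, transpose_apply, selMat, mul_ite, mul_one, mul_zero,
    Finset.sum_ite_eq', Finset.mem_univ, if_true, one_apply, Subtype.ext_iff, eq_comm]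

theorem stmt4_general (n r : ℕ) (δ Δ : ℝ) (hδ : δ < 1)
    (P Phat : Matrix (Fin n) (Fin r) ℝ)
    (T : Finset (Fin n)) (a : Fin r → ℝ)
    (hP : spNorm ((selMat T)ᵀ * Phat) ≤ δ)
    (hΔ : spNorm (((1 : Matrix (Fin n) (Fin n) ℝ) - Phat * Phatᵀ) * P) ≤ Δ) :
    vnorm ((-(selMat T *
        ((selMat T)ᵀ * ((1 : Matrix (Fin n) (Fin n) ℝ) - Phat * Phatᵀ) * selMat T)⁻¹ *
        (selMat T)ᵀ * ((1 : Matrix (Fin n) (Fin n) ℝ) - Phat * Phatᵀ))).mulVec (P.mulVec a))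
      ≤ Δ * vnorm a / (1 - δ ^ 2) := by
  set Ψ : Matrix (Fin n) (Fin n) ℝ := 1 - Phat * Phatᵀ
  set S := selMat T
  set B := Sᵀ * Phat
  set M := Sᵀ * Ψ * S
  have hS : Sᵀ * S = 1 := selMat_transpose_mul_self T
  have hM : M = 1 - B * Bᵀ := by
    rw [show M = Sᵀ * (1 - Phat * Phatᵀ) * S from rfl, Matrix.mul_sub, Matrix.sub_mul,
      Matrix.mul_one, hS, transpose_mul, transpose_transpose]
    simp only [B, Matrix.mul_assoc]
  have hgap : 0 < 1 - δ ^ 2 := by nlinarith [(spNorm_nonneg B).trans hP]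
  have hMbelow : ∀ x, (1 - δ ^ 2) * vnorm x ≤ vnorm (M *ᵥ x) := fun x =>
    hM ▸ mul_vnorm_le_vnorm_one_sub_mul_transpose_mulVec hP x
  have hSle : spNorm S ≤ 1 := spNorm_le_one_of_transpose_mul_self hS
  have hStle : spNorm Sᵀ ≤ 1 := (spNorm_transpose S).trans_le hSle
  calc vnorm (-(S * M⁻¹ * Sᵀ * Ψ) *ᵥ (P *ᵥ a))
      = vnorm (S *ᵥ (M⁻¹ *ᵥ (Sᵀ *ᵥ ((Ψ * P) *ᵥ a)))) := by
        rw [neg_mulVec, vnorm_neg]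
        simp only [mulVec_mulVec, Matrix.mul_assoc]
    _ ≤ vnorm (M⁻¹ *ᵥ (Sᵀ *ᵥ ((Ψ * P) *ᵥ a))) := by
        simpa only [one_mul] using vnorm_mulVec_le_of_spNorm_le hSle _
    _ ≤ vnorm (Sᵀ *ᵥ ((Ψ * P) *ᵥ a)) / (1 - δ ^ 2) := vnorm_inv_mulVec_le hgap hMbelow _
    _ ≤ vnorm ((Ψ * P) *ᵥ a) / (1 - δ ^ 2) := by
        gcongr
        simpa only [one_mul] using vnorm_mulVec_le_of_spNorm_le hStle _
    _ ≤ Δ * vnorm a / (1 - δ ^ 2) := by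
        gcongr
        exact vnorm_mulVec_le_of_spNorm_le hΔ a

/-- Bound on the least-squares debiasing error vector. -/
theorem stmt4 (n r : ℕ) (δ Δ : ℝ) (hδ0 : 0 ≤ δ) (hδ : δ < 1)
    (P Phat : Matrix (Fin n) (Fin r) ℝ)
    (horthP : Pᵀ * P = 1) (horthPhat : Phatᵀ * Phat = 1)
    (T : Finset (Fin n)) (a : Fin r → ℝ)
    (hP : spNorm ((selMat T)ᵀ * Phat) ≤ δ)
    (hΔ : spNorm (((1 : Matrix (Fin n) (Fin n) ℝ) - Phat * Phatᵀ) * P) ≤ Δ) :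
    vnorm ((-(selMat T *
        ((selMat T)ᵀ * ((1 : Matrix (Fin n) (Fin n) ℝ) - Phat * Phatᵀ) * selMat T)⁻¹ *
        (selMat T)ᵀ * ((1 : Matrix (Fin n) (Fin n) ℝ) - Phat * Phatᵀ))).mulVec (P.mulVec a))
      ≤ Δ * vnorm a / (1 - δ ^ 2) :=
  stmt4_general n r δ Δ hδ P Phat T a hP hΔ
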